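/- arXiv:1102.2124 — 6 statements merged into one kernel-verified Lean document; each statement's English description precedes it below -/
import Mathlib

section
/- Every zag sequence of length n is the right depth sequence of exactly one bracketing of size n; consequently, the number of zag sequences of length n equals the Catalan number C_{n−1}. (Claim proved at the end of the paper's Section 2.) -/
/-- A bracketing of size `n`: a full binary tree with `n` leaves. -/
inductive Bracketing : ℕ → Type
  | leaf : Bracketing 1
  | node : {k l : ℕ} → Bracketing k → Bracketing l → Bracketing (k + l)

/-- The `n`-ary regular operation induced by a bracketing on a magma `(G, op)`. -/
def Bracketing.eval {G : Type*} (op : G → G → G) : {n : ℕ} → Bracketing n → (Fin n → G) → G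
  | _, .leaf, v => v 0
  | _, .node P Q, v =>
      op (Bracketing.eval op P (fun i => v (Fin.castAdd _ i)))
         (Bracketing.eval op Q (fun i => v (Fin.natAdd _ i)))

/-- The associative spectrum: the number of distinct `n`-ary regular operations. -/
noncomputable def assocSpectrum {G : Type*} (op : G → G → G) (n : ℕ) : ℕ :=
  Nat.card {f : (Fin n → G) → G // ∃ B : Bracketing n, f = Bracketing.eval op B}

/-- The depth of the `i`-th leaf of a bracketing. -/
def Bracketing.depth : {n : ℕ} → Bracketing n → Fin n → ℕ
  | _, .leaf, _ => 0
  | _, .node (k := k) P Q, i =>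
      if h : (i : ℕ) < k then Bracketing.depth P ⟨i, h⟩ + 1
      else Bracketing.depth Q ⟨(i : ℕ) - k, by have := i.isLt; omega⟩ + 1

/-- The right depth of the `i`-th leaf of a bracketing. -/
def Bracketing.rdepth : {n : ℕ} → Bracketing n → Fin n → ℕ
  | _, .leaf, _ => 0
  | _, .node (k := k) P Q, i =>
      if h : (i : ℕ) < k then Bracketing.rdepth P ⟨i, h⟩
      else Bracketing.rdepth Q ⟨(i : ℕ) - k, by have := i.isLt; omega⟩ + 1

/-- The left depth of the `i`-th leaf of a bracketing. -/
def Bracketing.ldepth : {n : ℕ} → Bracketing n → Fin n → ℕ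
  | _, .leaf, _ => 0
  | _, .node (k := k) P Q, i =>
      if h : (i : ℕ) < k then Bracketing.ldepth P ⟨i, h⟩ + 1
      else Bracketing.ldepth Q ⟨(i : ℕ) - k, by have := i.isLt; omega⟩

/-- A magma operation is Catalan if distinct bracketings of equal size
    induce distinct regular operations. -/
def IsCatalanOp {G : Type*} (op : G → G → G) : Prop :=
  ∀ (n : ℕ) (B₁ B₂ : Bracketing n), B₁ ≠ B₂ →
    Bracketing.eval op B₁ ≠ Bracketing.eval op B₂

/-- A zag sequence: `d₁ = 0`, `d₂ = 1` (when `n ≥ 2`), and `1 ≤ d_{i+1} ≤ d_i + 1`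
(0-indexed here). -/
def IsZagSeq {n : ℕ} (d : Fin n → ℕ) : Prop :=
  (∀ h : 0 < n, d ⟨0, h⟩ = 0) ∧
  (∀ h : 1 < n, d ⟨1, h⟩ = 1) ∧
  (∀ i : ℕ, ∀ h : i + 1 < n, 1 ≤ d ⟨i + 1, h⟩ ∧ d ⟨i + 1, h⟩ ≤ d ⟨i, by omega⟩ + 1)

/-!
If `P` has `k` leaves, the right depth sequence of `P * Q` is that of `P` followed by that of `Q`
shifted up by one. A zag sequence starts with `0` and is positive afterwards, so the shifted
block starts with a `1` and contains no other `1`: position `k` is the last `1` of the whole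
sequence. Hence cutting a zag sequence at its last `1` recovers `P` and `Q`, and induction on
the length gives a bijection between bracketings of size `n` and zag sequences of length `n`.
Bracketings of size `n` are binary trees with `n - 1` internal nodes, counted by `catalan (n - 1)`.
-/

namespace List

variable {α : Type*}

lemma exists_eq_append_cons_notMem {a : α} {l : List α} (h : a ∈ l) :
    ∃ s t, l = s ++ a :: t ∧ a ∉ t := by
  induction l with
  | nil => simp at h
  | cons x l ih =>
    by_cases hl : a ∈ l
    · obtain ⟨s, t, rfl, ht⟩ := ih hl
      exact ⟨x :: s, t, rfl, ht⟩
    · obtain rfl : a = x := by simpa [hl] using h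
      exact ⟨[], l, rfl, hl⟩

lemma append_cons_inj_of_notMem_right {a : α} {s₁ s₂ t₁ t₂ : List α}
    (h₁ : a ∉ t₁) (h₂ : a ∉ t₂) : s₁ ++ a :: t₁ = s₂ ++ a :: t₂ ↔ s₁ = s₂ ∧ t₁ = t₂ := by
  constructor
  · simp only [append_eq_append_iff, cons_eq_append_iff, cons_eq_cons]
    rintro (⟨c, rfl, h⟩ | ⟨c, rfl, h⟩) <;> aesop
  · rintro ⟨rfl, rfl⟩
    rfl

end List

/-- `IsZagSeq` for lists; `d₁ = 1` is not required since it follows from the other conditions. -/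
structure IsZagList (s : List ℕ) : Prop where
  head?_eq : s.head? = some 0
  one_le : ∀ x ∈ s.tail, 1 ≤ x
  isChain : s.IsChain fun a b => b ≤ a + 1

namespace IsZagList

variable {s t u : List ℕ}

lemma singleton_zero : IsZagList [0] := ⟨rfl, by simp, List.isChain_singleton 0⟩

lemma exists_eq_cons (hs : IsZagList s) : ∃ s', s = 0 :: s' :=
  List.head?_eq_some_iff.1 hs.head?_eq

lemma append_map_succ (hs : IsZagList s) (ht : IsZagList t) :
    IsZagList (s ++ t.map (· + 1)) := by
  obtain ⟨s', rfl⟩ := hs.exists_eq_cons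
  obtain ⟨t', rfl⟩ := ht.exists_eq_cons
  refine ⟨rfl, ?_, ?_⟩
  · intro x hx
    simp only [List.cons_append, List.tail_cons, List.mem_append, List.mem_map] at hx
    rcases hx with hx | ⟨a, -, rfl⟩
    · exact hs.one_le x hx
    · omega
  · refine List.isChain_append.2 ⟨hs.isChain, ?_, by simp⟩
    exact List.isChain_map_of_isChain _ (fun a b h => by omega) ht.isChain

lemma append_map_succ_inj {s₁ s₂ t₁ t₂ : List ℕ} (ht₁ : IsZagList t₁) (ht₂ : IsZagList t₂) :
    s₁ ++ t₁.map (· + 1) = s₂ ++ t₂.map (· + 1) ↔ s₁ = s₂ ∧ t₁ = t₂ := by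
  obtain ⟨t₁, rfl⟩ := ht₁.exists_eq_cons
  obtain ⟨t₂, rfl⟩ := ht₂.exists_eq_cons
  have one_notMem {t : List ℕ} (ht : IsZagList (0 :: t)) : 1 ∉ t.map (· + 1) := by
    simpa using fun h : 0 ∈ t => Nat.not_succ_le_zero 0 (ht.one_le 0 h)
  simp only [List.map_cons, zero_add, List.cons.injEq, true_and,
    List.append_cons_inj_of_notMem_right (one_notMem ht₁) (one_notMem ht₂),
    List.map_inj_right Nat.succ_injective]

lemma exists_eq_append_map_succ (hu : IsZagList u) (h : 2 ≤ u.length) :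
    ∃ s t, IsZagList s ∧ IsZagList t ∧ u = s ++ t.map (· + 1) ∧
      s.length < u.length ∧ t.length < u.length := by
  obtain ⟨_ | ⟨x, u⟩, rfl⟩ := hu.exists_eq_cons
  · simp at h
  obtain rfl : x = 1 := by
    have := hu.one_le x (by simp)
    have := List.rel_of_isChain_cons_cons hu.isChain
    omega
  obtain ⟨_ | ⟨a, s⟩, y, hsy, hy⟩ :=
    List.exists_eq_append_cons_notMem (a := 1) (l := 0 :: 1 :: u) (by simp)
  · simp at hsy
  obtain rfl : a = 0 := (List.cons.inj hsy).1.symm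
  rw [hsy] at hu ⊢
  have two_le (x : ℕ) (hx : x ∈ y) : 2 ≤ x := by
    have := hu.one_le x (by simp [hx])
    have := ne_of_mem_of_not_mem hx hy
    omega
  have hchain := List.isChain_append.1 hu.isChain
  refine ⟨0 :: s, 0 :: y.map (· - 1), ⟨rfl, fun x hx => hu.one_le x (by simp_all), hchain.1⟩,
    ⟨rfl, ?_, ?_⟩, ?_, by simp, by simp⟩
  · simp only [List.tail_cons, List.mem_map]
    rintro _ ⟨x, hx, rfl⟩
    have := two_le x hx
    omega
  · exact List.isChain_map_of_isChain (S := fun a b => b ≤ a + 1) (· - 1)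
      (fun a b (h : b ≤ a + 1) => show b - 1 ≤ a - 1 + 1 by omega) hchain.2.1
  · simp only [List.map_cons, List.map_map, zero_add]
    rw [List.map_congr_left (g := id) fun x hx => by have := two_le x hx; simp; omega, List.map_id]

end IsZagList

lemma isZagSeq_iff_isZagList_ofFn {n : ℕ} (hn : 0 < n) {d : Fin n → ℕ} :
    IsZagSeq d ↔ IsZagList (List.ofFn d) := by
  obtain ⟨m, rfl⟩ := Nat.exists_eq_add_one_of_ne_zero hn.ne'
  rw [List.ofFn_succ]
  constructor
  · rintro ⟨h0, -, hstep⟩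
    refine ⟨by simpa using h0 hn, ?_, ?_⟩
    · simp only [List.tail_cons, List.mem_ofFn]
      rintro _ ⟨i, rfl⟩
      exact (hstep i (by simp)).1
    · rw [← List.ofFn_succ, List.isChain_ofFn]
      exact fun i hi => (hstep i hi).2
  · rintro ⟨h0, hpos, hchain⟩
    have h0 : d 0 = 0 := by simpa using h0
    have hpos (i : ℕ) (h : i + 1 < m + 1) : 1 ≤ d ⟨i + 1, h⟩ :=
      hpos _ (List.mem_ofFn.2 ⟨⟨i, by omega⟩, rfl⟩)
    rw [← List.ofFn_succ, List.isChain_ofFn] at hchain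
    refine ⟨fun _ => h0, fun h => ?_, fun i h => ⟨hpos i h, hchain i h⟩⟩
    exact le_antisymm (by simpa [h0] using hchain 0 h) (hpos 0 h)

namespace BinaryTree

variable {α : Type*}

def rightDepths : BinaryTree α → List ℕ
  | nil => [0]
  | node _ l r => l.rightDepths ++ r.rightDepths.map (· + 1)

lemma length_rightDepths (t : BinaryTree α) : t.rightDepths.length = t.numLeaves := by
  induction t with
  | nil => rfl
  | node _ l r ihl ihr => simp [rightDepths, numLeaves, ihl, ihr]

lemma isZagList_rightDepths (t : BinaryTree α) : IsZagList t.rightDepths := by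
  induction t with
  | nil => exact .singleton_zero
  | node _ l r ihl ihr => exact ihl.append_map_succ ihr

lemma rightDepths_injective : Function.Injective (rightDepths : BinaryTree Unit → List ℕ) := by
  have node_ne_nil (l r : BinaryTree Unit) :
      (node () l r).rightDepths ≠ (nil : BinaryTree Unit).rightDepths := by
    intro h
    have := congrArg List.length h
    simp only [length_rightDepths, numLeaves] at this
    have := l.numLeaves_pos
    have := r.numLeaves_pos
    omega
  intro t₁ t₂ h
  induction t₁ generalizing t₂ with
  | nil =>
    cases t₂ with
    | nil => rfl
    | node _ l r => exact (node_ne_nil l r h.symm).elim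
  | node _ l₁ r₁ ihl ihr =>
    cases t₂ with
    | nil => exact (node_ne_nil l₁ r₁ h).elim
    | node _ l₂ r₂ =>
      obtain ⟨hl, hr⟩ := (IsZagList.append_map_succ_inj (isZagList_rightDepths r₁)
        (isZagList_rightDepths r₂)).1 h
      rw [ihl hl, ihr hr]

lemma exists_rightDepths_eq {u : List ℕ} (hu : IsZagList u) :
    ∃ t : BinaryTree Unit, t.rightDepths = u := by
  induction h : u.length using Nat.strong_induction_on generalizing u with
  | _ n ih =>
    subst h
    by_cases hlen : 2 ≤ u.length
    · obtain ⟨s, t, hs, ht, rfl, hs', ht'⟩ := hu.exists_eq_append_map_succ hlen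
      obtain ⟨l, rfl⟩ := ih _ hs' hs rfl
      obtain ⟨r, rfl⟩ := ih _ ht' ht rfl
      exact ⟨node () l r, rfl⟩
    · obtain ⟨u', rfl⟩ := hu.exists_eq_cons
      obtain rfl : u' = [] := by simpa using hlen
      exact ⟨nil, rfl⟩

lemma card_numLeaves_eq (n : ℕ) :
    Nat.card {t : BinaryTree Unit // t.numLeaves = n + 1} = catalan n := by
  simp_rw [numLeaves_eq_numNodes_succ, Nat.add_right_cancel_iff]
  rw [← treesOfNumNodesEq_card_eq_catalan, ← Nat.card_eq_finsetCard]
  exact Nat.card_congr (Equiv.subtypeEquivRight fun t => mem_treesOfNumNodesEq.symm)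

end BinaryTree

namespace Bracketing

variable {n : ℕ}

def toTree : {n : ℕ} → Bracketing n → BinaryTree Unit
  | _, leaf => .nil
  | _, node P Q => .node () P.toTree Q.toTree

lemma numLeaves_toTree : ∀ {n : ℕ} (B : Bracketing n), B.toTree.numLeaves = n
  | _, leaf => rfl
  | _, node P Q => by rw [toTree, BinaryTree.numLeaves, numLeaves_toTree P, numLeaves_toTree Q]

def ofTree : (t : BinaryTree Unit) → Bracketing t.numLeaves
  | .nil => leaf
  | .node _ l r => node (ofTree l) (ofTree r)

lemma toTree_ofTree : ∀ t : BinaryTree Unit, (ofTree t).toTree = t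
  | .nil => rfl
  | .node () l r => congrArg₂ (BinaryTree.node ()) (toTree_ofTree l) (toTree_ofTree r)

lemma node_heq_node {k l k' l' : ℕ} {P : Bracketing k} {Q : Bracketing l} {P' : Bracketing k'}
    {Q' : Bracketing l'} (hk : k = k') (hl : l = l') (hP : P ≍ P') (hQ : Q ≍ Q') :
    node P Q ≍ node P' Q' := by
  subst hk hl
  rw [eq_of_heq hP, eq_of_heq hQ]

lemma ofTree_toTree : ∀ {n : ℕ} (B : Bracketing n), ofTree B.toTree ≍ B
  | _, leaf => HEq.rfl
  | _, node P Q => node_heq_node (numLeaves_toTree P) (numLeaves_toTree Q)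
      (ofTree_toTree P) (ofTree_toTree Q)

def equivTree (n : ℕ) : Bracketing n ≃ {t : BinaryTree Unit // t.numLeaves = n} where
  toFun B := ⟨B.toTree, B.numLeaves_toTree⟩
  invFun t := t.2 ▸ ofTree t.1
  left_inv B := eq_of_heq ((eqRec_heq _ _).trans (ofTree_toTree B))
  right_inv := by
    rintro ⟨t, rfl⟩
    exact Subtype.ext (toTree_ofTree t)

lemma size_pos (B : Bracketing n) : 0 < n := B.numLeaves_toTree ▸ B.toTree.numLeaves_pos

lemma ofFn_rdepth : ∀ {n : ℕ} (B : Bracketing n), List.ofFn B.rdepth = B.toTree.rightDepths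
  | _, leaf => rfl
  | _, node P Q => by
    change _ = P.toTree.rightDepths ++ Q.toTree.rightDepths.map (· + 1)
    rw [List.ofFn_add, ← ofFn_rdepth P, ← ofFn_rdepth Q, List.map_ofFn]
    congr 2 <;> funext i <;> simp [rdepth]

lemma isZagSeq_rdepth (B : Bracketing n) : IsZagSeq B.rdepth :=
  (isZagSeq_iff_isZagList_ofFn B.size_pos).2 (B.ofFn_rdepth ▸ B.toTree.isZagList_rightDepths)

lemma rdepth_injective : Function.Injective (rdepth : Bracketing n → Fin n → ℕ) := by
  intro B₁ B₂ h
  have : B₁.toTree.rightDepths = B₂.toTree.rightDepths := by rw [← ofFn_rdepth, ← ofFn_rdepth, h]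
  exact (equivTree n).injective (Subtype.ext (BinaryTree.rightDepths_injective this))

lemma exists_rdepth_eq (hn : 0 < n) {d : Fin n → ℕ} (hd : IsZagSeq d) :
    ∃ B : Bracketing n, B.rdepth = d := by
  obtain ⟨t, ht⟩ := BinaryTree.exists_rightDepths_eq ((isZagSeq_iff_isZagList_ofFn hn).1 hd)
  obtain rfl : t.numLeaves = n := by rw [← t.length_rightDepths, ht, List.length_ofFn]
  exact ⟨ofTree t, List.ofFn_injective (by rw [ofFn_rdepth, toTree_ofTree, ht])⟩

noncomputable def rdepthEquiv (hn : 0 < n) : Bracketing n ≃ {d : Fin n → ℕ // IsZagSeq d} :=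
  Equiv.ofBijective (fun B => ⟨B.rdepth, B.isZagSeq_rdepth⟩)
    ⟨fun _ _ h => rdepth_injective (congrArg Subtype.val h),
      fun ⟨_, hd⟩ => (exists_rdepth_eq hn hd).imp fun _ hB => Subtype.ext hB⟩

end Bracketing

/-- End of paper's Section 2: every zag sequence of length `n` is the right depth sequence
of exactly one bracketing of size `n`; consequently the number of zag sequences of length
`n` equals the Catalan number `C_{n-1}`. -/
theorem stmt6 (n : ℕ) (hn : 1 ≤ n) :
    (∀ d : Fin n → ℕ, IsZagSeq d → ∃! B : Bracketing n, B.rdepth = d) ∧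
    Nat.card {d : Fin n → ℕ // IsZagSeq d} = catalan (n - 1) := by
  refine ⟨fun d hd => ?_, ?_⟩
  · obtain ⟨B, hB⟩ := Bracketing.exists_rdepth_eq hn hd
    exact ⟨B, hB, fun B' hB' => Bracketing.rdepth_injective (hB'.trans hB.symm)⟩
  · obtain ⟨m, rfl⟩ := Nat.exists_eq_add_of_le' hn
    rw [← Nat.card_congr (Bracketing.rdepthEquiv hn), Nat.card_congr (Bracketing.equivTree _),
      BinaryTree.card_numLeaves_eq, Nat.add_sub_cancel]
end

section
/- For the magma (ℤ, −) of integers under subtraction, the associative spectrum satisfies s(n) = 2^{n−2} for every n ≥ 2; more precisely, the n-ary regular operations over subtraction are exactly the operations of the form x_1 − x_2 ± x_3 ± ⋯ ± x_n, with every choice of the signs ± occurring. (Paper's Proposition 3.1.) -/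
/-!
Over subtraction a bracketing evaluates to `∑ (-1) ^ rᵢ xᵢ`, where `rᵢ` is the right depth of the
`i`-th leaf; the first two leaves always have right depth `0` and `1`. Conversely every sign
pattern `+, -, ±, …, ±` occurs: a new last leaf `y` is attached to `B = P - Q` either as `B - y`
(sign `-`) or as `P - (Q - y)` (sign `+`). Distinct sign vectors give distinct linear forms, which
yields `s(n) = 2 ^ (n - 2)`.
-/

namespace Bracketing

lemma pos : ∀ {n : ℕ}, Bracketing n → 0 < n
  | _, leaf => Nat.one_pos
  | _, node P _ => Nat.add_pos_left P.pos _

def sign {n : ℕ} (B : Bracketing n) (i : Fin n) : ℤˣ := (-1) ^ B.rdepth i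

variable {k l n : ℕ}

@[simp] lemma sign_leaf (i : Fin 1) : leaf.sign i = 1 := rfl

@[simp] lemma sign_node_castAdd (P : Bracketing k) (Q : Bracketing l) (i : Fin k) :
    (node P Q).sign (Fin.castAdd l i) = P.sign i := by
  simp [sign, rdepth, i.isLt]

@[simp] lemma sign_node_natAdd (P : Bracketing k) (Q : Bracketing l) (i : Fin l) :
    (node P Q).sign (Fin.natAdd k i) = -Q.sign i := by
  simp [sign, rdepth, pow_succ]

lemma eval_sub : ∀ {n : ℕ} (B : Bracketing n) (v : Fin n → ℤ),
    B.eval (· - ·) v = ∑ i, (B.sign i : ℤ) * v i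
  | _, leaf, v => by simp [eval]
  | _, node P Q, v => by
    rw [eval, eval_sub P, eval_sub Q, Fin.sum_univ_add, sub_eq_add_neg, ← Finset.sum_neg_distrib]
    simp

lemma sign_node_leaf (B : Bracketing n) : (node B leaf).sign = Fin.snoc B.sign (-1) := by
  funext i
  refine Fin.lastCases ?_ (fun j => ?_) i
  · exact (sign_node_natAdd B leaf 0).trans (by simp)
  · exact (sign_node_castAdd B leaf j).trans (by simp)

lemma sign_node_node_leaf (P : Bracketing k) (Q : Bracketing l) :
    (node P (node Q leaf)).sign = Fin.snoc (node P Q).sign 1 := by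
  funext i
  refine Fin.lastCases ?_ (fun j => ?_) i
  · exact (sign_node_natAdd P _ (Fin.natAdd l 0)).trans (by simp)
  · refine Fin.addCases (fun a => ?_) (fun b => ?_) j
    · exact (sign_node_castAdd P _ a).trans (by simp)
    · rw [Fin.snoc_castSucc, sign_node_natAdd, ← Fin.natAdd_castSucc, sign_node_natAdd]
      exact congrArg _ (sign_node_castAdd Q leaf b)


lemma sign_mk_zero : ∀ {n : ℕ} (B : Bracketing n) (h : 0 < n), B.sign ⟨0, h⟩ = 1
  | _, leaf, _ => rfl
  | _, node P _, _ => (sign_node_castAdd P _ ⟨0, P.pos⟩).trans (sign_mk_zero P _)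

lemma sign_mk_one : ∀ {n : ℕ} (B : Bracketing n) (h : 1 < n), B.sign ⟨1, h⟩ = -1
  | _, leaf, h => absurd h (lt_irrefl 1)
  | _, node (k := k) P Q, h => by
    by_cases hk : 1 < k
    · exact (sign_node_castAdd P Q ⟨1, hk⟩).trans (sign_mk_one P hk)
    · obtain rfl : k = 1 := le_antisymm (not_lt.1 hk) P.pos
      rw [show (⟨1, h⟩ : Fin (1 + _)) = Fin.natAdd 1 ⟨0, Q.pos⟩ from Fin.ext rfl,
        sign_node_natAdd, sign_mk_zero]

lemma exists_sign_eq_snoc_one : ∀ {n : ℕ} (B : Bracketing n), 1 < n →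
    ∃ B' : Bracketing (n + 1), B'.sign = Fin.snoc B.sign 1
  | _, leaf, h => absurd h (lt_irrefl 1)
  | _, node (l := l) P Q, _ => ⟨node (l := l + 1) P (node Q leaf), sign_node_node_leaf P Q⟩

theorem exists_sign_eq : ∀ {m : ℕ} (ε : Fin (m + 2) → ℤˣ), ε 0 = 1 → ε 1 = -1 →
    ∃ B : Bracketing (m + 2), B.sign = ε
  | 0, ε, h0, h1 => ⟨node (l := 1) leaf leaf, by
      rw [sign_node_leaf]; funext i; fin_cases i
      · exact h0.symm
      · exact h1.symm⟩
  | m + 1, ε, h0, h1 => by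
    obtain ⟨B, hB⟩ := exists_sign_eq (Fin.init ε) h0 h1
    rw [← Fin.snoc_init_self ε, ← hB]
    rcases Int.units_eq_one_or (ε (Fin.last _)) with hlast | hlast <;> rw [hlast]
    · exact exists_sign_eq_snoc_one B (by omega)
    · exact ⟨node (l := 1) B leaf, sign_node_leaf B⟩

end Bracketing

open Bracketing Matrix

lemma exists_eval_sub_eq_iff {m : ℕ} (f : (Fin (m + 2) → ℤ) → ℤ) :
    (∃ B : Bracketing (m + 2), f = B.eval (· - ·)) ↔
      ∃ ε : Fin (m + 2) → ℤˣ, ε 0 = 1 ∧ ε 1 = -1 ∧ f = fun v => ∑ i, (ε i : ℤ) * v i := by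
  constructor
  · rintro ⟨B, rfl⟩
    exact ⟨B.sign, B.sign_mk_zero _, B.sign_mk_one _, funext B.eval_sub⟩
  · rintro ⟨ε, h0, h1, rfl⟩
    obtain ⟨B, rfl⟩ := exists_sign_eq ε h0 h1
    exact ⟨B, funext fun v => (B.eval_sub v).symm⟩

lemma assocSpectrum_sub (m : ℕ) : assocSpectrum (fun a b : ℤ => a - b) (m + 2) = 2 ^ m := by
  let g (δ : Fin m → ℤˣ) :
      {f : (Fin (m + 2) → ℤ) → ℤ // ∃ B : Bracketing (m + 2), f = B.eval (· - ·)} :=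
    ⟨_, (exists_eval_sub_eq_iff _).2 ⟨vecCons 1 (vecCons (-1) δ), rfl, rfl, rfl⟩⟩
  have hg : Function.Bijective g := by
    constructor
    · intro δ δ' h
      have hcoe := dotProduct_eq _ _ (congrFun (congrArg Subtype.val h))
      have hcons : vecCons 1 (vecCons (-1) δ) = vecCons 1 (vecCons (-1) δ') :=
        funext fun i => Units.ext (congrFun hcoe i)
      simpa [vecCons_inj] using hcons
    · rintro ⟨f, hf⟩
      obtain ⟨ε, h0, h1, rfl⟩ := (exists_eval_sub_eq_iff f).1 hf
      have hε : vecCons 1 (vecCons (-1) fun j => ε j.succ.succ) = ε :=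
        funext fun i => Fin.cases h0.symm (Fin.cases h1.symm fun _ => rfl) i
      exact ⟨fun j => ε j.succ.succ, Subtype.ext (by simp only [g, hε])⟩
  rw [assocSpectrum, ← Nat.card_eq_of_bijective g hg]
  simp [Nat.card_eq_fintype_card, Fintype.card_units_int]

/-- Paper's Proposition 3.1: for subtraction of integers, `s(n) = 2^{n-2}`; more precisely
the `n`-ary regular operations over subtraction are exactly the operations
`x₁ - x₂ ± x₃ ± ⋯ ± xₙ`, with every choice of the signs occurring. -/
theorem stmt7 (n : ℕ) (hn : 2 ≤ n) :
    assocSpectrum (fun a b : ℤ => a - b) n = 2 ^ (n - 2) ∧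
    ∀ f : (Fin n → ℤ) → ℤ,
      (∃ B : Bracketing n, f = Bracketing.eval (fun a b : ℤ => a - b) B) ↔
      (∃ ε : Fin n → ℤ, (∀ i, ε i = 1 ∨ ε i = -1) ∧
        ε ⟨0, by omega⟩ = 1 ∧ ε ⟨1, by omega⟩ = -1 ∧
        f = fun v => ∑ i, ε i * v i) := by
  obtain ⟨m, rfl⟩ := Nat.exists_eq_add_of_le' hn
  refine ⟨assocSpectrum_sub m, fun f => (exists_eval_sub_eq_iff f).trans ⟨?_, ?_⟩⟩
  · rintro ⟨ε, h0, h1, rfl⟩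
    exact ⟨fun i => ε i, fun i => (Int.units_eq_one_or (ε i)).imp (congrArg _) (congrArg _),
      congrArg _ h0, congrArg _ h1, rfl⟩
  · rintro ⟨ε, hε, h0, h1, rfl⟩
    have hunit i : IsUnit (ε i) := Int.isUnit_iff.2 (hε i)
    exact ⟨fun i => (hunit i).unit, Units.ext h0, Units.ext h1, rfl⟩
end

section
/- The arithmetic mean, i.e. the binary operation (x,y) ↦ (x+y)/2 on the real numbers, is a Catalan operation: any two distinct bracketings of the same size induce distinct regular operations on (ℝ, (x+y)/2). In particular, for every bracketing B of size n the induced operation is b(x_1,…,x_n) = Σ_{i=1}^n 2^{−d_i}·x_i, where d_i is the depth of x_i in B. (Paper's Proposition 3.2.) -/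
lemma bpos : ∀ {n : ℕ}, Bracketing n → 0 < n
  | _, .leaf => one_pos
  | _, .node P _ => Nat.add_pos_left (bpos P) _

lemma depth_castAdd {k l} (P : Bracketing k) (Q : Bracketing l) (i : Fin k) :
    (P.node Q).depth (Fin.castAdd l i) = P.depth i + 1 := by
  simp [Bracketing.depth, i.isLt]

lemma depth_natAdd {k l} (P : Bracketing k) (Q : Bracketing l) (i : Fin l) :
    (P.node Q).depth (Fin.natAdd k i) = Q.depth i + 1 := by
  rw [Bracketing.depth, dif_neg (by simp)]
  congr 1
  congr 1
  simp

lemma zpow_succ_neg (d : ℕ) : (2:ℝ) ^ (-(↑(d+1):ℤ)) = (2:ℝ) ^ (-(d:ℤ)) / 2 := by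
  push_cast
  rw [neg_add, zpow_add₀ (two_ne_zero), zpow_neg_one]
  ring

lemma mean_eval : ∀ {n : ℕ} (B : Bracketing n) (v : Fin n → ℝ),
    Bracketing.eval (fun x y : ℝ => (x + y) / 2) B v
      = ∑ i, (2 : ℝ) ^ (-(B.depth i : ℤ)) * v i
  | _, .leaf, v => by simp [Bracketing.eval, Bracketing.depth]
  | _, .node (k := k) (l := l) P Q, v => by
    rw [Bracketing.eval, mean_eval P, mean_eval Q, Fin.sum_univ_add]
    simp only [depth_castAdd, depth_natAdd, zpow_succ_neg]
    rw [Finset.sum_congr rfl (fun x _ => by ring :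
        ∀ x ∈ Finset.univ, (2:ℝ) ^ (-((P.depth x):ℤ)) / 2 * v (Fin.castAdd l x)
          = 2 ^ (-((P.depth x):ℤ)) * v (Fin.castAdd l x) / 2),
      Finset.sum_congr rfl (fun x _ => by ring :
        ∀ x ∈ Finset.univ, (2:ℝ) ^ (-((Q.depth x):ℤ)) / 2 * v (Fin.natAdd k x)
          = 2 ^ (-((Q.depth x):ℤ)) * v (Fin.natAdd k x) / 2),
      ← Finset.sum_div, ← Finset.sum_div]
    ring

lemma eval_one : ∀ {n : ℕ} (B : Bracketing n),
    Bracketing.eval (fun x y : ℝ => (x + y) / 2) B (fun _ => 1) = 1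
  | _, .leaf => rfl
  | _, .node P Q => by
    rw [Bracketing.eval]
    show (_ + _) / 2 = 1
    rw [eval_one P, eval_one Q]
    norm_num

lemma kraft {n : ℕ} (B : Bracketing n) : ∑ i, (2 : ℝ) ^ (-(B.depth i : ℤ)) = 1 := by
  have := mean_eval B (fun _ => 1)
  rw [eval_one B] at this
  simpa using this.symm

/-- partial sum function -/
noncomputable def psum {n : ℕ} (f : Fin n → ℕ) (m : ℕ) : ℝ :=
  ∑ i : Fin n, if (i : ℕ) < m then (2 : ℝ) ^ (-(f i : ℤ)) else 0

lemma psum_strict {n : ℕ} (f : Fin n → ℕ) {k₁ k₂ : ℕ} (h1 : k₁ < k₂) (h2 : k₁ < n) :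
    psum f k₁ < psum f k₂ := by
  apply Finset.sum_lt_sum
  · intro i _
    by_cases hi : (i : ℕ) < k₁
    · rw [if_pos hi, if_pos (lt_trans hi h1)]
    · rw [if_neg hi]
      split
      · positivity
      · exact le_refl _
  · refine ⟨⟨k₁, h2⟩, Finset.mem_univ _, ?_⟩
    rw [if_neg (by simp), if_pos (by simpa using h1)]
    positivity

lemma psum_inj {n : ℕ} (f : Fin n → ℕ) {k₁ k₂ : ℕ} (h1 : k₁ ≤ n) (h2 : k₂ ≤ n)
    (h : psum f k₁ = psum f k₂) : k₁ = k₂ := by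
  rcases lt_trichotomy k₁ k₂ with hlt | heq | hgt
  · exact absurd h (ne_of_lt (psum_strict f hlt (lt_of_lt_of_le hlt h2)))
  · exact heq
  · exact absurd h.symm (ne_of_lt (psum_strict f hgt (lt_of_lt_of_le hgt h1)))

lemma psum_node {k l : ℕ} (P : Bracketing k) (Q : Bracketing l) :
    psum (P.node Q).depth k = 1 / 2 := by
  unfold psum
  rw [Fin.sum_univ_add]
  have h1 : ∀ i : Fin k, (if ((Fin.castAdd l i : Fin (k+l)) : ℕ) < k
      then (2:ℝ) ^ (-(((P.node Q).depth (Fin.castAdd l i)):ℤ)) else 0)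
      = 2 ^ (-((P.depth i):ℤ)) / 2 := by
    intro i
    rw [if_pos (by simpa using i.isLt), depth_castAdd, zpow_succ_neg]
  have h2 : ∀ i : Fin l, (if ((Fin.natAdd k i : Fin (k+l)) : ℕ) < k
      then (2:ℝ) ^ (-(((P.node Q).depth (Fin.natAdd k i)):ℤ)) else 0) = 0 := by
    intro i
    rw [if_neg (by simp)]
  rw [Finset.sum_congr rfl (fun x _ => h1 x), Finset.sum_congr rfl (fun x _ => h2 x),
    ← Finset.sum_div, kraft P]
  simp

lemma exists_rep : ∀ {n : ℕ} (B : Bracketing n),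
    (∃ h : n = 1, B = h ▸ Bracketing.leaf) ∨
    ∃ (k l : ℕ) (P : Bracketing k) (Q : Bracketing l) (h : k + l = n), B = h ▸ (P.node Q)
  | _, .leaf => Or.inl ⟨rfl, rfl⟩
  | _, .node P Q => Or.inr ⟨_, _, P, Q, rfl, rfl⟩

lemma psum_cast {n : ℕ} (B : Bracketing n) {k l : ℕ} (P : Bracketing k) (Q : Bracketing l)
    (h : k + l = n) (hB : B = h ▸ (P.node Q)) : psum B.depth k = 1 / 2 := by
  subst h; subst hB; exact psum_node P Q

lemma depth_node_left {k l : ℕ} (P₁ P₂ : Bracketing k) (Q₁ Q₂ : Bracketing l)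
    (h : (P₁.node Q₁).depth = (P₂.node Q₂).depth) : P₁.depth = P₂.depth := by
  funext i
  have := congrFun h (Fin.castAdd l i)
  rw [depth_castAdd, depth_castAdd] at this
  omega

lemma depth_node_right {k l : ℕ} (P₁ P₂ : Bracketing k) (Q₁ Q₂ : Bracketing l)
    (h : (P₁.node Q₁).depth = (P₂.node Q₂).depth) : Q₁.depth = Q₂.depth := by
  funext i
  have := congrFun h (Fin.natAdd k i)
  rw [depth_natAdd, depth_natAdd] at this
  omega

lemma depth_inj : ∀ (n : ℕ) (B₁ B₂ : Bracketing n), B₁.depth = B₂.depth → B₁ = B₂ := by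
  intro n
  induction n using Nat.strong_induction_on with
  | _ n ih =>
    intro B₁ B₂ h
    rcases exists_rep B₁ with ⟨h1, e1⟩ | ⟨k₁, l₁, P₁, Q₁, h1, e1⟩ <;>
      rcases exists_rep B₂ with ⟨h2, e2⟩ | ⟨k₂, l₂, P₂, Q₂, h2, e2⟩
    · subst h1; subst e1; subst e2; rfl
    · exfalso; have := bpos P₂; have := bpos Q₂; omega
    · exfalso; have := bpos P₁; have := bpos Q₁; omega
    · have hk1 : k₁ ≤ n := by omega
      have hk2 : k₂ ≤ n := by omega
      have hp1 : psum B₁.depth k₁ = 1 / 2 := psum_cast B₁ P₁ Q₁ h1 e1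
      have hp2 : psum B₁.depth k₂ = 1 / 2 := by rw [h]; exact psum_cast B₂ P₂ Q₂ h2 e2
      have hk : k₁ = k₂ := psum_inj B₁.depth hk1 hk2 (by rw [hp1, hp2])
      subst hk
      have hl : l₁ = l₂ := by omega
      subst hl
      subst h1
      subst e1
      have e2' : B₂ = P₂.node Q₂ := e2
      subst e2'
      have hP := depth_node_left P₁ P₂ Q₁ Q₂ h
      have hQ := depth_node_right P₁ P₂ Q₁ Q₂ h
      have p1 := bpos P₁; have q1 := bpos Q₁
      rw [ih k₁ (by omega) P₁ P₂ hP, ih l₁ (by omega) Q₁ Q₂ hQ]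

lemma zpow_two_inj : Function.Injective (fun z : ℤ => (2:ℝ) ^ z) :=
  zpow_right_injective₀ (by norm_num) (by norm_num)

/-- Paper's Proposition 3.2: the arithmetic mean on `ℝ` is Catalan; moreover a bracketing
`B` induces the operation `(x₁,…,xₙ) ↦ ∑ 2^{-dᵢ}·xᵢ` where `dᵢ` is the depth of `xᵢ`. -/
theorem stmt8 :
    IsCatalanOp (fun x y : ℝ => (x + y) / 2) ∧
    ∀ (n : ℕ) (B : Bracketing n) (v : Fin n → ℝ),
      Bracketing.eval (fun x y : ℝ => (x + y) / 2) B v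
        = ∑ i, (2 : ℝ) ^ (-(B.depth i : ℤ)) * v i := by
  constructor
  · intro n B₁ B₂ hne heq
    apply hne
    apply depth_inj
    funext i
    have h := congrFun heq (Pi.single i 1)
    rw [mean_eval, mean_eval] at h
    simp only [Pi.single_apply, mul_ite, mul_one, mul_zero,
      Finset.sum_ite_eq', Finset.mem_univ, if_pos] at h
    have := zpow_two_inj h
    omega
  · exact fun n B v => mean_eval B v
end

section
/- The cross product of vectors in ℝ³ is a Catalan operation: any two distinct bracketings of the same size induce distinct regular operations on (ℝ³, ×), where × denotes the cross product. (Paper's Proposition 3.5.) -/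
/-!
Over an ordered field `K`, bracketings of equal size inducing proportional operations on `K³` are
equal. Every induced operation is onto. If the left factors had sizes `k < k'`, fixing the arguments that feed
the right factor of the second bracketing confines its values to a plane `d⊥`, while the right
factor of the first one still sees free arguments; these give it two non-parallel values `a`,
`b`, and then its values `x ⨯₃ a`, `x ⨯₃ b` span `K³`. With equal splits,
`p u ⨯₃ q v = t • (p' u ⨯₃ q' v)` for independent argument sequences `u`, `v`; as all four factors
are onto, this forces `p = r • p'` and `q = s • q'`, and induction applies.
-/

open Matrix Function

section CrossProduct

variable {K : Type*} [Field K]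

theorem exists_smul_eq_of_cross_eq_zero {a b : Fin 3 → K} (h : b ⨯₃ a = 0) (hb : b ≠ 0) :
    ∃ s : K, s • b = a := by
  by_contra! hne
  exact crossProduct_ne_zero_iff_linearIndependent.mpr
    ((LinearIndependent.pair_iff' hb).mpr hne) h

theorem eq_zero_of_cross_eq_zero_of_cross_eq_zero {a b d : Fin 3 → K} (hab : a ⨯₃ b ≠ 0)
    (ha : a ⨯₃ d = 0) (hb : b ⨯₃ d = 0) : d = 0 := by
  by_contra hd
  obtain ⟨s, rfl⟩ := exists_smul_eq_of_cross_eq_zero (by rw [← cross_anticomm, ha, neg_zero]) hd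
  rw [LinearMap.map_smul₂, ← cross_anticomm, hb, neg_zero, smul_zero] at hab
  exact hab rfl

theorem cross_eq_zero_of_forall_dotProduct_cross_eq_zero {a d : Fin 3 → K}
    (h : ∀ x, d ⬝ᵥ x ⨯₃ a = 0) : a ⨯₃ d = 0 :=
  dotProduct_eq_zero _ fun x => by
    rw [dotProduct_comm, triple_product_permutation, triple_product_permutation, h]

theorem exists_cross_ne_zero : ∃ x y : Fin 3 → K, x ⨯₃ y ≠ 0 :=
  ⟨Pi.single 0 1, Pi.single 1 1, fun h => by simpa [cross_apply] using congrFun h 2⟩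

theorem exists_cross_eq (c : Fin 3 → K) : ∃ a b : Fin 3 → K, a ⨯₃ b = c := by
  by_cases hc : c 0 = 0
  · refine ⟨![1, 0, 0], ![0, c 2, -c 1], ?_⟩
    ext i; fin_cases i <;> simp [cross_apply, hc]
  · refine ⟨![c 1, -c 0, 0], ![c 2 / c 0, 0, -1], ?_⟩
    ext i; fin_cases i <;> simp [cross_apply, mul_div_cancel₀ _ hc]

theorem cross_cross_cross_self_right (a b c : Fin 3 → K) :
    (a ⨯₃ c) ⨯₃ (b ⨯₃ c) = (c ⬝ᵥ a ⨯₃ b) • c := by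
  ext i; fin_cases i <;> simp [cross_apply, dotProduct, Fin.sum_univ_three] <;> ring

theorem cross_cross_cross_self_left (a b c : Fin 3 → K) :
    (c ⨯₃ a) ⨯₃ (c ⨯₃ b) = (c ⬝ᵥ a ⨯₃ b) • c := by
  rw [← cross_anticomm a, ← cross_anticomm b, LinearMap.map_neg₂, map_neg, neg_neg,
    cross_cross_cross_self_right]

theorem exists_eq_smul_of_cross_eq_smul_cross {α β : Type*} {f f' : α → Fin 3 → K}
    {g g' : β → Fin 3 → K} {t : K} (hf : Surjective f) (hf' : Surjective f')
    (hg : Surjective g) (h : ∀ a b, f a ⨯₃ g b = t • (f' a ⨯₃ g' b)) :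
    ∃ r : K, ∀ a, f a = r • f' a := by
  -- `g' b` is parallel to `g b`; take `g b` to be a basis vector
  have hbasis : ∀ i : Fin 3, ∃ σ : K, ∀ a,
      f a ⨯₃ Pi.single i 1 = σ • (f' a ⨯₃ Pi.single i 1) := by
    intro i
    obtain ⟨b, hb⟩ := hg (Pi.single i 1)
    have hpar : g b ⨯₃ g' b = 0 := cross_eq_zero_of_forall_dotProduct_cross_eq_zero fun x => by
      obtain ⟨a, rfl⟩ := hf x
      rw [h, dotProduct_smul, dot_cross_self, smul_zero]
    obtain ⟨c, hc⟩ := exists_smul_eq_of_cross_eq_zero hpar (by simp [hb])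
    refine ⟨t * c, fun a => ?_⟩
    rw [← hb, h, ← hc, map_smul, smul_smul]
  obtain ⟨σ₀, hσ₀⟩ := hbasis 0
  obtain ⟨σ₁, hσ₁⟩ := hbasis 1
  have h₀ a : f a 1 = σ₀ * f' a 1 ∧ f a 2 = σ₀ * f' a 2 :=
    ⟨by simpa [cross_apply] using congrFun (hσ₀ a) 2,
      by simpa [cross_apply] using congrFun (hσ₀ a) 1⟩
  have h₁ a : f a 0 = σ₁ * f' a 0 ∧ f a 2 = σ₁ * f' a 2 :=
    ⟨by simpa [cross_apply] using congrFun (hσ₁ a) 2,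
      by simpa [cross_apply] using congrFun (hσ₁ a) 0⟩
  obtain ⟨a₂, ha₂⟩ := hf' (Pi.single 2 1)
  have hσ : σ₀ = σ₁ := by
    simpa [ha₂] using (h₀ a₂).2.symm.trans (h₁ a₂).2
  refine ⟨σ₀, fun a => ?_⟩
  ext i
  fin_cases i <;> simp [hσ, (h₁ a).1, (h₀ a).1, (h₀ a).2]

end CrossProduct

def seqAppend {α : Type*} (k : ℕ) (u v : ℕ → α) : ℕ → α :=
  fun i => if i < k then u i else v (i - k)

namespace Bracketing

variable {K : Type*} [Field K]

/-- Arguments are indexed by `ℕ`, so that bracketings of the same size that split differently at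
the root are evaluated on the same type. -/
def crossEval {n : ℕ} (B : Bracketing n) (w : ℕ → Fin 3 → K) : Fin 3 → K :=
  B.eval (fun u v => u ⨯₃ v) fun i => w i

theorem one_le_size {n : ℕ} (B : Bracketing n) : 1 ≤ n := by
  induction B <;> omega

theorem crossEval_congr {n : ℕ} (B : Bracketing n) {w w' : ℕ → Fin 3 → K}
    (h : ∀ i < n, w i = w' i) : crossEval B w = crossEval B w' := by
  unfold crossEval
  congr 1
  exact funext fun i => h i i.isLt

theorem crossEval_node {k l : ℕ} (P : Bracketing k) (Q : Bracketing l) (w : ℕ → Fin 3 → K) :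
    crossEval (node P Q) w = crossEval P w ⨯₃ crossEval Q fun i => w (k + i) :=
  rfl

theorem crossEval_node_seqAppend {k l : ℕ} (P : Bracketing k) (Q : Bracketing l)
    (u v : ℕ → Fin 3 → K) :
    crossEval (node P Q) (seqAppend k u v) = crossEval P u ⨯₃ crossEval Q v := by
  rw [crossEval_node,
    crossEval_congr P (w := seqAppend k u v) (w' := u) fun i hi => if_pos hi]
  congr 2
  exact funext fun i => by simp [seqAppend]

theorem crossEval_surjective {n : ℕ} (B : Bracketing n) :
    Surjective (crossEval (K := K) B) := by
  induction B with
  | leaf => exact fun c => ⟨fun _ => c, rfl⟩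
  | node P Q ihP ihQ =>
    intro c
    obtain ⟨a, b, rfl⟩ := exists_cross_eq c
    obtain ⟨u, rfl⟩ := ihP a
    obtain ⟨v, rfl⟩ := ihQ b
    exact ⟨seqAppend _ u v, crossEval_node_seqAppend P Q u v⟩

section Ordered

variable [LinearOrder K] [IsStrictOrderedRing K]

theorem exists_crossEval_cross_ne_zero {l : ℕ} (Q : Bracketing l) {j : ℕ} (hj : 1 ≤ j)
    (hjl : j ≤ l) : ∃ w₁ w₂ : ℕ → Fin 3 → K,
      (∀ i, j ≤ i → w₁ i = w₂ i) ∧ crossEval Q w₁ ⨯₃ crossEval Q w₂ ≠ 0 := by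
  induction Q generalizing j with
  | leaf =>
    obtain ⟨x, y, hxy⟩ := exists_cross_ne_zero (K := K)
    refine ⟨Pi.single 0 x, Pi.single 0 y, fun i hi => ?_, by simpa [crossEval, eval] using hxy⟩
    simp [show i ≠ 0 by omega]
  | @node k₁ l₁ Q₁ Q₂ ih₁ ih₂ =>
    by_cases hjk : j ≤ k₁
    · obtain ⟨w₁, w₂, htail, hne⟩ := ih₁ hj hjk
      obtain ⟨v, hv⟩ := crossEval_surjective Q₂ (crossEval Q₁ w₁ ⨯₃ crossEval Q₁ w₂)
      refine ⟨seqAppend k₁ w₁ v, seqAppend k₁ w₂ v, fun i hi => ?_, ?_⟩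
      · unfold seqAppend
        split_ifs
        exacts [htail i hi, rfl]
      · rw [crossEval_node_seqAppend, crossEval_node_seqAppend, hv,
          cross_cross_cross_self_right]
        exact smul_ne_zero (mt dotProduct_self_eq_zero.mp hne) hne
    · obtain ⟨v₁, v₂, htail, hne⟩ := ih₂ (j := j - k₁) (by omega) (by omega)
      obtain ⟨u, hu⟩ := crossEval_surjective Q₁ (crossEval Q₂ v₁ ⨯₃ crossEval Q₂ v₂)
      refine ⟨seqAppend k₁ u v₁, seqAppend k₁ u v₂, fun i hi => ?_, ?_⟩
      · unfold seqAppend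
        rw [if_neg (by omega), if_neg (by omega), htail _ (by omega)]
      · rw [crossEval_node_seqAppend, crossEval_node_seqAppend, hu,
          cross_cross_cross_self_left]
        exact smul_ne_zero (mt dotProduct_self_eq_zero.mp hne) hne

theorem not_lt_of_crossEval_node_eq_smul {k l k' l' : ℕ} {P : Bracketing k} {Q : Bracketing l}
    {P' : Bracketing k'} {Q' : Bracketing l'} {t : K} (hn : k + l = k' + l')
    (h : ∀ w : ℕ → Fin 3 → K, crossEval (node P Q) w = t • crossEval (node P' Q') w) :
    ¬k < k' := by
  intro hk
  obtain ⟨w₁, w₂, htail, hne⟩ :=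
    exists_crossEval_cross_ne_zero (K := K) Q (j := k' - k) (by omega)
      (by have := one_le_size Q'; omega)
  -- in `node P' Q'` on `seqAppend k u v`, the factor `Q'` only sees `v` from index `k' - k` on
  set d := crossEval Q' fun i => w₁ (k' - k + i)
  have hvalues : ∀ v, (∀ i, k' - k ≤ i → w₁ i = v i) → ∀ x, ∃ y,
      x ⨯₃ crossEval Q v = t • (y ⨯₃ d) := by
    intro v hv x
    obtain ⟨u, rfl⟩ := crossEval_surjective P x
    refine ⟨crossEval P' (seqAppend k u v), ?_⟩
    rw [← crossEval_node_seqAppend, h, crossEval_node]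
    congr 3
    refine funext fun i => ?_
    simp only [seqAppend]
    rw [if_neg (by omega), ← hv (k' + i - k) (by omega)]
    congr 1
    omega
  have hperp : ∀ v, (∀ i, k' - k ≤ i → w₁ i = v i) → crossEval Q v ⨯₃ d = 0 :=
    fun v hv => cross_eq_zero_of_forall_dotProduct_cross_eq_zero fun x => by
      obtain ⟨y, hy⟩ := hvalues v hv x
      rw [hy, dotProduct_smul, dot_cross_self, smul_zero]
  have hd : d = 0 := eq_zero_of_cross_eq_zero_of_cross_eq_zero hne
    (hperp w₁ fun _ _ => rfl) (hperp w₂ htail)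
  obtain ⟨y, hy⟩ := hvalues w₁ (fun _ _ => rfl) (crossEval Q w₂)
  rw [hd, map_zero, smul_zero, ← cross_anticomm, neg_eq_zero] at hy
  exact hne hy

theorem heq_of_crossEval_eq_smul {m : ℕ} (B₁ : Bracketing m) {n : ℕ} (B₂ : Bracketing n)
    (hmn : m = n) {t : K} (h : ∀ w : ℕ → Fin 3 → K, crossEval B₁ w = t • crossEval B₂ w) :
    B₁ ≍ B₂ := by
  induction B₁ generalizing n B₂ t with
  | leaf =>
    cases B₂ with
    | leaf => rfl
    | node P' Q' => have := one_le_size P'; have := one_le_size Q'; omega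
  | @node k l P Q ihP ihQ =>
    cases B₂ with
    | leaf => have := one_le_size P; have := one_le_size Q; omega
    | @node k' l' P' Q' =>
      have ht : t ≠ 0 := by
        rintro rfl
        obtain ⟨x, hx⟩ := exists_ne (0 : Fin 3 → K)
        obtain ⟨w, rfl⟩ := crossEval_surjective (node P Q) x
        exact hx (by rw [h, zero_smul])
      have h' : ∀ w, crossEval (node P' Q') w = t⁻¹ • crossEval (node P Q) w := fun w => by
        rw [h, inv_smul_smul₀ ht]
      obtain rfl : k = k' := by
        have := not_lt_of_crossEval_node_eq_smul hmn h
        have := not_lt_of_crossEval_node_eq_smul hmn.symm h'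
        omega
      obtain rfl : l = l' := by omega
      have hsplit : ∀ u v,
          crossEval P u ⨯₃ crossEval Q v = t • (crossEval P' u ⨯₃ crossEval Q' v) :=
        fun u v => by simpa only [crossEval_node_seqAppend] using h (seqAppend k u v)
      obtain ⟨r, hr⟩ := exists_eq_smul_of_cross_eq_smul_cross (crossEval_surjective P)
        (crossEval_surjective P') (crossEval_surjective Q) hsplit
      obtain ⟨s, hs⟩ := exists_eq_smul_of_cross_eq_smul_cross (crossEval_surjective Q)
        (crossEval_surjective Q') (crossEval_surjective P) fun (v u : ℕ → Fin 3 → K) => by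
          rw [← cross_anticomm (crossEval P u), hsplit, ← cross_anticomm (crossEval P' u),
            smul_neg]
      rw [eq_of_heq (ihP P' rfl hr), eq_of_heq (ihQ Q' rfl hs)]

end Ordered

end Bracketing

/-- Paper's Proposition 3.5: the cross product of vectors in `ℝ³` is Catalan. -/
theorem stmt10 :
    IsCatalanOp (fun u v : Fin 3 → ℝ => crossProduct u v) := by
  intro n B₁ B₂ hne heval
  refine hne (eq_of_heq (Bracketing.heq_of_crossEval_eq_smul (K := ℝ) B₁ B₂ rfl (t := 1)
    fun w => ?_))
  rw [one_smul, Bracketing.crossEval, Bracketing.crossEval, heval]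
end

section
/- Boolean implication, i.e. the binary operation x → y on {0,1} (with 0→0 = 0→1 = 1→1 = 1 and 1→0 = 0), is a Catalan operation: any two distinct bracketings of the same size induce distinct regular operations over it. (Paper's Proposition 4.3.) -/
abbrev impOp : Bool → Bool → Bool := fun x y => !x || y

lemma size_pos : ∀ {n : ℕ}, Bracketing n → 1 ≤ n := by
  intro n B
  induction B with
  | leaf => exact le_refl 1
  | node P Q ihP ihQ => omega

lemma eval_node {k l : ℕ} (P : Bracketing k) (Q : Bracketing l) (w : Fin (k + l) → Bool) :
    Bracketing.eval impOp (P.node Q) w =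
      (!(Bracketing.eval impOp P (fun i => w (Fin.castAdd l i))) ||
        Bracketing.eval impOp Q (fun i => w (Fin.natAdd k i))) := rfl

lemma eval_true : ∀ {n : ℕ} (B : Bracketing n),
    Bracketing.eval impOp B (fun _ => true) = true := by
  intro n B
  induction B with
  | leaf => rfl
  | node P Q ihP ihQ =>
    rw [eval_node]
    simp [ihP, ihQ]

lemma exists_false_vec : ∀ {n : ℕ} (B : Bracketing n),
    ∃ v, Bracketing.eval impOp B v = false := by
  intro n B
  induction B with
  | leaf => exact ⟨fun _ => false, rfl⟩
  | node P Q ihP ihQ =>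
    rename_i k l
    obtain ⟨v, hv⟩ := ihQ
    refine ⟨Fin.append (fun _ => true) v, ?_⟩
    rw [eval_node]
    have h1 : (fun i => Fin.append (fun _ => true) v (Fin.castAdd l i)) = (fun _ : Fin k => true) := by
      funext i; simp [Fin.append_left]
    have h2 : (fun i => Fin.append (fun _ => true) v (Fin.natAdd k i)) = v := by
      funext i; simp [Fin.append_right]
    rw [h1, h2, eval_true, hv]
    rfl

lemma eval_oneFalse : ∀ {n : ℕ} (B : Bracketing n) (i : ℕ),
    Bracketing.eval impOp B (fun j => !decide ((j : ℕ) = i)) = !decide (i = n - 1) := by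
  intro n B
  induction B with
  | leaf =>
    intro i
    show (!decide ((0 : ℕ) = i)) = !decide (i = 1 - 1)
    congr 1
    exact decide_eq_decide.mpr (by omega)
  | node P Q ihP ihQ =>
    intro i
    rename_i k l
    have hk := size_pos P
    have hl := size_pos Q
    rw [eval_node]
    by_cases hik : i < k
    · have h1 : (fun j : Fin k => !decide (((Fin.castAdd l j) : ℕ) = i)) =
          (fun j : Fin k => !decide ((j : ℕ) = i)) := by
        funext j; simp
      have h2 : (fun j : Fin l => !decide (((Fin.natAdd k j) : ℕ) = i)) =
          (fun _ : Fin l => true) := by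
        funext j
        simp only [Fin.natAdd, Fin.val_mk]
        have : ¬ (k + (j : ℕ) = i) := by omega
        simp [this]
      rw [h1, h2, eval_true]
      simp only [Bool.or_true]
      symm
      have : ¬ (i = k + l - 1) := by omega
      simp [this]
    · have h1 : (fun j : Fin k => !decide (((Fin.castAdd l j) : ℕ) = i)) =
          (fun _ : Fin k => true) := by
        funext j
        have : ¬ ((j : ℕ) = i) := by have := j.isLt; omega
        simp [this]
      have h2 : (fun j : Fin l => !decide (((Fin.natAdd k j) : ℕ) = i)) =
          (fun j : Fin l => !decide ((j : ℕ) = i - k)) := by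
        funext j
        simp only [Fin.natAdd, Fin.val_mk]
        congr 1
        exact decide_eq_decide.mpr (by omega)
      rw [h1, h2, eval_true, ihQ]
      simp only [Bool.not_true, Bool.false_or]
      congr 1
      exact decide_eq_decide.mpr (by omega)

lemma node_two_true {k l : ℕ} (P : Bracketing k) (Q : Bracketing l) :
    Bracketing.eval impOp (P.node Q)
      (fun j => !(decide ((j : ℕ) = k - 1) || decide ((j : ℕ) = k + l - 1))) = true := by
  have hk := size_pos P
  have hl := size_pos Q
  rw [eval_node]
  have h1 : (fun j : Fin k => !(decide (((Fin.castAdd l j) : ℕ) = k - 1) ||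
      decide (((Fin.castAdd l j) : ℕ) = k + l - 1))) =
      (fun j : Fin k => !decide ((j : ℕ) = k - 1)) := by
    funext j
    have : ¬ ((j : ℕ) = k + l - 1) := by have := j.isLt; omega
    simp [this]
  have h2 : (fun j : Fin l => !(decide (((Fin.natAdd k j) : ℕ) = k - 1) ||
      decide (((Fin.natAdd k j) : ℕ) = k + l - 1))) =
      (fun j : Fin l => !decide ((j : ℕ) = l - 1)) := by
    funext j
    simp only [Fin.natAdd, Fin.val_mk]
    have h3 : ¬ (k + (j : ℕ) = k - 1) := by omega
    have h4 : (k + (j : ℕ) = k + l - 1) ↔ ((j : ℕ) = l - 1) := by have := j.isLt; omega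
    simp [h3, decide_eq_decide.mpr h4]
  rw [h1, h2, eval_oneFalse, eval_oneFalse]
  simp

lemma node_two_false {k l : ℕ} (P : Bracketing k) (Q : Bracketing l) (i : ℕ) (hi : i + 1 < k) :
    Bracketing.eval impOp (P.node Q)
      (fun j => !(decide ((j : ℕ) = i) || decide ((j : ℕ) = k + l - 1))) = false := by
  have hk := size_pos P
  have hl := size_pos Q
  rw [eval_node]
  have h1 : (fun j : Fin k => !(decide (((Fin.castAdd l j) : ℕ) = i) ||
      decide (((Fin.castAdd l j) : ℕ) = k + l - 1))) =
      (fun j : Fin k => !decide ((j : ℕ) = i)) := by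
    funext j
    have : ¬ ((j : ℕ) = k + l - 1) := by have := j.isLt; omega
    simp [this]
  have h2 : (fun j : Fin l => !(decide (((Fin.natAdd k j) : ℕ) = i) ||
      decide (((Fin.natAdd k j) : ℕ) = k + l - 1))) =
      (fun j : Fin l => !decide ((j : ℕ) = l - 1)) := by
    funext j
    simp only [Fin.natAdd, Fin.val_mk]
    have h3 : ¬ (k + (j : ℕ) = i) := by omega
    have h4 : (k + (j : ℕ) = k + l - 1) ↔ ((j : ℕ) = l - 1) := by have := j.isLt; omega
    simp [h3, decide_eq_decide.mpr h4]
  rw [h1, h2, eval_oneFalse, eval_oneFalse]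
  have : ¬ (i = k - 1) := by omega
  simp [this]

lemma eval_cast {m n : ℕ} (h : m = n) (B : Bracketing m) (v : Fin n → Bool) :
    Bracketing.eval impOp (h ▸ B) v = Bracketing.eval impOp B (fun i => v (Fin.cast h i)) := by
  subst h; rfl

lemma node_inv : ∀ {n : ℕ} (B : Bracketing n), n ≠ 1 →
    ∃ (k l : ℕ) (P : Bracketing k) (Q : Bracketing l) (h : k + l = n),
      B = h ▸ (P.node Q) := by
  intro n B hn
  cases B with
  | leaf => exact absurd rfl hn
  | node P Q => exact ⟨_, _, P, Q, rfl, rfl⟩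

lemma leaf_inv : ∀ {n : ℕ} (B : Bracketing n), n = 1 → HEq B Bracketing.leaf := by
  intro n B
  cases B with
  | leaf => intro _; rfl
  | node P Q =>
    intro h
    exact absurd h (by have := size_pos P; have := size_pos Q; omega)

lemma eval_inj : ∀ {n : ℕ} (B₁ B₂ : Bracketing n),
    Bracketing.eval impOp B₁ = Bracketing.eval impOp B₂ → B₁ = B₂ := by
  intro n B₁
  induction B₁ with
  | leaf =>
    intro B₂ _
    exact (eq_of_heq (leaf_inv B₂ rfl)).symm
  | node P Q ihP ihQ =>
    rename_i k l
    intro B₂ H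
    have hk := size_pos P
    have hl := size_pos Q
    have hn : k + l ≠ 1 := by omega
    obtain ⟨k', l', P', Q', h, rfl⟩ := node_inv B₂ hn
    have hk' := size_pos P'
    have hl' := size_pos Q'
    -- pointwise version of H with the cast pushed inside
    have H' : ∀ v : Fin (k + l) → Bool,
        Bracketing.eval impOp (P.node Q) v =
          Bracketing.eval impOp (P'.node Q') (fun i => v (Fin.cast h i)) := by
      intro v
      rw [← eval_cast h]
      exact congrFun H v
    -- Step 1: k = k'
    have hkk : k = k' := by
      by_contra hne
      rcases Nat.lt_or_ge k k' with hlt | hge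
      · have h1 := H' (fun j => !(decide ((j : ℕ) = k - 1) || decide ((j : ℕ) = k + l - 1)))
        rw [node_two_true P Q] at h1
        have h2 : (fun i : Fin (k' + l') =>
            (fun j : Fin (k + l) => !(decide ((j : ℕ) = k - 1) || decide ((j : ℕ) = k + l - 1)))
              (Fin.cast h i)) =
            (fun i : Fin (k' + l') => !(decide ((i : ℕ) = k - 1) || decide ((i : ℕ) = k' + l' - 1))) := by
          funext i
          simp only [Fin.coe_cast]
          congr 2
          exact decide_eq_decide.mpr (by omega)
        rw [h2, node_two_false P' Q' (k - 1) (by omega)] at h1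
        exact absurd h1 (by simp)
      · have hlt : k' < k := by omega
        have h1 := H' (fun j => !(decide ((j : ℕ) = k' - 1) || decide ((j : ℕ) = k + l - 1)))
        rw [node_two_false P Q (k' - 1) (by omega)] at h1
        have h2 : (fun i : Fin (k' + l') =>
            (fun j : Fin (k + l) => !(decide ((j : ℕ) = k' - 1) || decide ((j : ℕ) = k + l - 1)))
              (Fin.cast h i)) =
            (fun i : Fin (k' + l') => !(decide ((i : ℕ) = k' - 1) || decide ((i : ℕ) = k' + l' - 1))) := by
          funext i
          simp only [Fin.coe_cast]
          congr 2
          exact decide_eq_decide.mpr (by omega)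
        rw [h2, node_two_true P' Q'] at h1
        exact absurd h1 (by simp)
    have hll : l = l' := by omega
    subst hkk
    subst hll
    have hcast : h ▸ (P'.node Q') = P'.node Q' := rfl
    rw [hcast]
    rw [hcast] at H
    -- Step 2: eval Q = eval Q'
    have hQ : Bracketing.eval impOp Q = Bracketing.eval impOp Q' := by
      funext v
      have h1 := congrFun H (Fin.append (fun _ => true) v)
      rw [eval_node, eval_node] at h1
      have e1 : (fun i => Fin.append (fun _ : Fin k => true) v (Fin.castAdd l i)) =
          (fun _ : Fin k => true) := by
        funext i; simp [Fin.append_left]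
      have e2 : (fun i => Fin.append (fun _ : Fin k => true) v (Fin.natAdd k i)) = v := by
        funext i; simp [Fin.append_right]
      rw [e1, e2, eval_true P, eval_true P'] at h1
      simpa using h1
    -- Step 3: eval P = eval P'
    have hP : Bracketing.eval impOp P = Bracketing.eval impOp P' := by
      obtain ⟨v₀, hv₀⟩ := exists_false_vec Q
      have hv₀' : Bracketing.eval impOp Q' v₀ = false := by rw [← hQ]; exact hv₀
      funext u
      have h1 := congrFun H (Fin.append u v₀)
      rw [eval_node, eval_node] at h1
      have e1 : (fun i => Fin.append u v₀ (Fin.castAdd l i)) = u := by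
        funext i; simp [Fin.append_left]
      have e2 : (fun i => Fin.append u v₀ (Fin.natAdd k i)) = v₀ := by
        funext i; simp [Fin.append_right]
      rw [e1, e2, hv₀, hv₀'] at h1
      simpa using h1
    rw [ihP P' hP, ihQ Q' hQ]

/-- Paper's Proposition 4.3: Boolean implication is Catalan. -/
theorem stmt13 : IsCatalanOp (fun x y : Bool => !x || y) := by
  intro n B₁ B₂ hne H
  exact hne (eval_inj B₁ B₂ H)
end

section
/- Let p be a nonzero complex number. The binary operation (x,y) ↦ px + py on ℂ fails to be Catalan if and only if p is a root of unity; likewise, the binary operation (x,y) ↦ x + py on ℂ fails to be Catalan if and only if p is a root of unity. (Paper's Proposition 6.4.) -/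
namespace Bracketing

theorem one_le : ∀ {n : ℕ}, Bracketing n → 1 ≤ n
  | _, .leaf => le_refl 1
  | _, .node P Q => le_trans (one_le P) (Nat.le_add_right _ _)

def bcast {m n : ℕ} (h : m = n) (B : Bracketing m) : Bracketing n := h ▸ B

@[simp] theorem rdepth_bcast {m n : ℕ} (h : m = n) (B : Bracketing m) (i : Fin n) :
    (B.bcast h).rdepth i = B.rdepth (Fin.cast h.symm i) := by subst h; rfl

@[simp] theorem depth_bcast {m n : ℕ} (h : m = n) (B : Bracketing m) (i : Fin n) :
    (B.bcast h).depth i = B.depth (Fin.cast h.symm i) := by subst h; rfl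

theorem depth_eq_add : ∀ {n : ℕ} (B : Bracketing n) (i : Fin n),
    B.depth i = B.ldepth i + B.rdepth i
  | _, .leaf, _ => rfl
  | _, .node (k := k) P Q, i => by
      by_cases h : (i : ℕ) < k <;> simp [depth, ldepth, rdepth, h, depth_eq_add] <;> omega

theorem rdepth_eq_zero_iff : ∀ {n : ℕ} (B : Bracketing n) (i : Fin n),
    B.rdepth i = 0 ↔ (i : ℕ) = 0
  | _, .leaf, i => by simp [rdepth, Fin.val_eq_zero i]
  | _, .node (k := k) P Q, i => by
      have hk := one_le P
      by_cases h : (i : ℕ) < k <;> simp [rdepth, h, rdepth_eq_zero_iff] <;> omega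

end Bracketing
namespace Bracketing

theorem rdepth_node_eq_one {k l : ℕ} (P : Bracketing k) (Q : Bracketing l)
    (i : Fin (k + l)) (hik : (i : ℕ) = k) : (node P Q).rdepth i = 1 := by
  have h : ¬ (i : ℕ) < k := by omega
  simp only [rdepth, h, dif_neg, not_false_iff]
  have : Q.rdepth ⟨(i : ℕ) - k, by have := i.isLt; omega⟩ = 0 := by
    rw [rdepth_eq_zero_iff]; simp [hik]
  omega

theorem two_le_rdepth_node {k l : ℕ} (P : Bracketing k) (Q : Bracketing l)
    (i : Fin (k + l)) (hik : k < (i : ℕ)) : 2 ≤ (node P Q).rdepth i := by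
  have h : ¬ (i : ℕ) < k := by omega
  simp only [rdepth, h, dif_neg, not_false_iff]
  have : ¬ Q.rdepth ⟨(i : ℕ) - k, by have := i.isLt; omega⟩ = 0 := by
    rw [rdepth_eq_zero_iff]; simp; omega
  omega

theorem rdepth_inj_heq : ∀ {n : ℕ} (B₁ : Bracketing n) {m : ℕ} (B₂ : Bracketing m)
    (h : n = m), (∀ i : Fin n, B₁.rdepth i = B₂.rdepth (Fin.cast h i)) → HEq B₁ B₂ := by
  intro n B₁
  induction B₁ with
  | leaf =>
    intro m B₂ h hr
    cases B₂ with
    | leaf => rfl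
    | node P' Q' => exfalso; have := one_le P'; have := one_le Q'; omega
  | node P Q ihP ihQ =>
    rename_i k l
    intro m B₂ h hr
    cases B₂ with
    | leaf => exfalso; have := one_le P; have := one_le Q; omega
    | node P' Q' =>
      rename_i k' l'
      have hP := one_le P; have hQ := one_le Q
      have hP' := one_le P'; have hQ' := one_le Q'
      have hkk : k = k' := by
        by_contra hne
        rcases Nat.lt_or_ge k k' with hlt | hge
        · have hi : k' < k + l := by omega
          have h1 := two_le_rdepth_node P Q ⟨k', hi⟩ (by simpa using hlt)
          have h2 := rdepth_node_eq_one P' Q' (Fin.cast h ⟨k', hi⟩) (by simp)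
          rw [hr ⟨k', hi⟩] at h1; omega
        · have hlt : k' < k := by omega
          have hi : k < k' + l' := by omega
          have h1 := rdepth_node_eq_one P Q ⟨k, by omega⟩ (by simp)
          have h2 := two_le_rdepth_node P' Q' (Fin.cast h ⟨k, by omega⟩) (by simpa using hlt)
          rw [hr ⟨k, by omega⟩] at h1; omega
      subst hkk
      have hll : l = l' := by omega
      subst hll
      have hPP : P = P' := by
        apply eq_of_heq
        apply ihP P' rfl
        intro i
        have := hr (Fin.castAdd l i)
        simpa [rdepth, i.isLt] using this
      have hQQ : Q = Q' := by
        apply eq_of_heq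
        apply ihQ Q' rfl
        intro i
        have := hr (Fin.natAdd k i)
        simpa [rdepth] using this
      subst hPP; subst hQQ; rfl

theorem rdepth_inj {n : ℕ} (B₁ B₂ : Bracketing n) (h : B₁.rdepth = B₂.rdepth) :
    B₁ = B₂ :=
  eq_of_heq (rdepth_inj_heq B₁ B₂ rfl (fun i => by rw [h]; rfl))

end Bracketing
namespace Bracketing

@[simp] theorem depth_node_castAdd {k l : ℕ} (P : Bracketing k) (Q : Bracketing l)
    (i : Fin k) : (node P Q).depth (Fin.castAdd l i) = P.depth i + 1 := by
  simp [Bracketing.depth, i.isLt]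

@[simp] theorem depth_node_natAdd {k l : ℕ} (P : Bracketing k) (Q : Bracketing l)
    (i : Fin l) : (node P Q).depth (Fin.natAdd k i) = Q.depth i + 1 := by
  have h : ¬ (k + (i : ℕ) < k) := by omega
  simp [Bracketing.depth, h]

@[simp] theorem rdepth_node_castAdd {k l : ℕ} (P : Bracketing k) (Q : Bracketing l)
    (i : Fin k) : (node P Q).rdepth (Fin.castAdd l i) = P.rdepth i := by
  simp [Bracketing.rdepth, i.isLt]

@[simp] theorem rdepth_node_natAdd {k l : ℕ} (P : Bracketing k) (Q : Bracketing l)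
    (i : Fin l) : (node P Q).rdepth (Fin.natAdd k i) = Q.rdepth i + 1 := by
  have h : ¬ (k + (i : ℕ) < k) := by omega
  simp [Bracketing.rdepth, h]

@[simp] theorem ldepth_node_castAdd {k l : ℕ} (P : Bracketing k) (Q : Bracketing l)
    (i : Fin k) : (node P Q).ldepth (Fin.castAdd l i) = P.ldepth i + 1 := by
  simp [Bracketing.ldepth, i.isLt]

@[simp] theorem ldepth_node_natAdd {k l : ℕ} (P : Bracketing k) (Q : Bracketing l)
    (i : Fin l) : (node P Q).ldepth (Fin.natAdd k i) = Q.ldepth i := by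
  have h : ¬ (k + (i : ℕ) < k) := by omega
  simp [Bracketing.ldepth, h]

theorem kraft : ∀ {n : ℕ} (B : Bracketing n), ∑ i, ((2:ℚ)⁻¹) ^ (B.depth i) = 1
  | _, .leaf => by simp [Bracketing.depth]
  | _, .node P Q => by
    rw [Fin.sum_univ_add]
    simp only [depth_node_castAdd, depth_node_natAdd, pow_succ]
    rw [← Finset.sum_mul, ← Finset.sum_mul, kraft P, kraft Q]
    norm_num

theorem prefix_inj {n : ℕ} (f : Fin n → ℚ) (hf : ∀ i, 0 < f i) {a b : ℕ}
    (ha : a ≤ n) (hb : b ≤ n)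
    (hs : ∑ i : Fin n, (if (i:ℕ) < a then f i else 0) = ∑ i : Fin n, (if (i:ℕ) < b then f i else 0)) :
    a = b := by
  by_contra hne
  wlog hab : a < b generalizing a b
  · exact this hb ha hs.symm (Ne.symm hne) (by omega)
  have hz : ∑ i : Fin n, ((if (i:ℕ) < b then f i else 0) - (if (i:ℕ) < a then f i else 0)) = 0 := by
    rw [Finset.sum_sub_distrib, hs, sub_self]
  have hpos : 0 < ∑ i : Fin n, ((if (i:ℕ) < b then f i else 0) - (if (i:ℕ) < a then f i else 0)) := by
    apply Finset.sum_pos'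
    · intro i _
      by_cases h1 : (i:ℕ) < a <;> by_cases h2 : (i:ℕ) < b <;>
        simp [h1, h2] <;> [skip; exact le_of_lt (hf i)] <;> omega
    · refine ⟨⟨a, by omega⟩, Finset.mem_univ _, ?_⟩
      simp [hab, hf _]
  linarith

theorem depth_inj_heq : ∀ {n : ℕ} (B₁ : Bracketing n) {m : ℕ} (B₂ : Bracketing m)
    (h : n = m), (∀ i : Fin n, B₁.depth i = B₂.depth (Fin.cast h i)) → HEq B₁ B₂ := by
  intro n B₁
  induction B₁ with
  | leaf =>
    intro m B₂ h hr
    cases B₂ with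
    | leaf => rfl
    | node P' Q' => exfalso; have := one_le P'; have := one_le Q'; omega
  | node P Q ihP ihQ =>
    rename_i k l
    intro m B₂ h hr
    cases B₂ with
    | leaf => exfalso; have := one_le P; have := one_le Q; omega
    | node P' Q' =>
      rename_i k' l'
      have hP := one_le P; have hQ := one_le Q
      have hP' := one_le P'; have hQ' := one_le Q'
      set f : Fin (k + l) → ℚ := fun i => (2:ℚ)⁻¹ ^ ((node P Q).depth i) with hfdef
      have hfpos : ∀ i, 0 < f i := fun i => by positivity
      have h1 : ∑ i : Fin (k+l), (if (i:ℕ) < k then f i else 0) = 1/2 := by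
        rw [Fin.sum_univ_add]
        have e1 : ∀ i : Fin k, (if ((Fin.castAdd l i : Fin (k+l)) : ℕ) < k then f (Fin.castAdd l i) else 0)
            = (2:ℚ)⁻¹ ^ (P.depth i) * 2⁻¹ := by
          intro i; simp [hfdef, i.isLt, pow_succ, mul_comm]
        have e2 : ∀ i : Fin l, (if ((Fin.natAdd k i : Fin (k+l)) : ℕ) < k then f (Fin.natAdd k i) else 0) = 0 := by
          intro i; simp
        rw [Finset.sum_congr rfl (fun i _ => e1 i), Finset.sum_congr rfl (fun i _ => e2 i)]
        rw [← Finset.sum_mul, kraft P]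
        norm_num
      have h2 : ∑ i : Fin (k+l), (if (i:ℕ) < k' then f i else 0) = 1/2 := by
        have hff : ∀ i : Fin (k + l), f i = (2:ℚ)⁻¹ ^ ((node P' Q').depth (Fin.cast h i)) := by
          intro i; rw [hfdef]; simp only [hr i]
        calc ∑ i : Fin (k+l), (if (i:ℕ) < k' then f i else 0)
            = ∑ i : Fin (k+l), (if ((Fin.cast h i : Fin (k'+l')) : ℕ) < k' then
                (2:ℚ)⁻¹ ^ ((node P' Q').depth (Fin.cast h i)) else 0) := by
              apply Finset.sum_congr rfl; intro i _; rw [← hff i]; rfl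
          _ = ∑ j : Fin (k'+l'), (if (j : ℕ) < k' then (2:ℚ)⁻¹ ^ ((node P' Q').depth j) else 0) :=
              Fin.sum_congr' (fun j : Fin (k'+l') => if (j : ℕ) < k' then (2:ℚ)⁻¹ ^ ((node P' Q').depth j) else 0) h
          _ = 1/2 := by
              rw [Fin.sum_univ_add]
              have e1 : ∀ i : Fin k', (if ((Fin.castAdd l' i : Fin (k'+l')) : ℕ) < k' then
                  (2:ℚ)⁻¹ ^ ((node P' Q').depth (Fin.castAdd l' i)) else 0)
                  = (2:ℚ)⁻¹ ^ (P'.depth i) * 2⁻¹ := by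
                intro i; simp [i.isLt, pow_succ, mul_comm]
              have e2 : ∀ i : Fin l', (if ((Fin.natAdd k' i : Fin (k'+l')) : ℕ) < k' then
                  (2:ℚ)⁻¹ ^ ((node P' Q').depth (Fin.natAdd k' i)) else 0) = 0 := by
                intro i; simp
              rw [Finset.sum_congr rfl (fun i _ => e1 i), Finset.sum_congr rfl (fun i _ => e2 i)]
              rw [← Finset.sum_mul, kraft P']
              norm_num
      have hkk : k = k' := prefix_inj f hfpos (by omega) (by omega) (h1.trans h2.symm)
      subst hkk
      have hll : l = l' := by omega
      subst hll
      have hPP : P = P' := by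
        apply eq_of_heq
        apply ihP P' rfl
        intro i
        have := hr (Fin.castAdd l i)
        simp only [Fin.cast_refl, id] at this ⊢
        simpa using this
      have hQQ : Q = Q' := by
        apply eq_of_heq
        apply ihQ Q' rfl
        intro i
        have := hr (Fin.natAdd k i)
        simp only [Fin.cast_refl, id] at this ⊢
        simpa using this
      subst hPP; subst hQQ; rfl

theorem depth_inj {n : ℕ} (B₁ B₂ : Bracketing n) (h : B₁.depth = B₂.depth) :
    B₁ = B₂ :=
  eq_of_heq (depth_inj_heq B₁ B₂ rfl (fun i => by rw [h]; rfl))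

end Bracketing
namespace Bracketing

theorem eval_affine (a b : ℂ) : ∀ {n : ℕ} (B : Bracketing n) (v : Fin n → ℂ),
    Bracketing.eval (fun x y => a * x + b * y) B v
      = ∑ i, a ^ (B.ldepth i) * b ^ (B.rdepth i) * v i
  | _, .leaf, v => by
    simp [Bracketing.eval, Bracketing.ldepth, Bracketing.rdepth]
  | _, .node P Q, v => by
    rw [Bracketing.eval, eval_affine a b P, eval_affine a b Q, Fin.sum_univ_add]
    simp only [ldepth_node_castAdd, rdepth_node_castAdd, ldepth_node_natAdd,
      rdepth_node_natAdd, pow_succ]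
    rw [Finset.mul_sum, Finset.mul_sum]
    congr 1 <;> (apply Finset.sum_congr rfl; intro i _; ring)

theorem eval_single (a b : ℂ) {n : ℕ} (B : Bracketing n) (j : Fin n) :
    Bracketing.eval (fun x y => a * x + b * y) B (Pi.single j 1)
      = a ^ (B.ldepth j) * b ^ (B.rdepth j) := by
  rw [eval_affine]
  rw [Finset.sum_eq_single j]
  · simp
  · intro i _ hij; simp [Pi.single_apply, hij]
  · intro h; exact absurd (Finset.mem_univ j) h

def rcomb : (n : ℕ) → Bracketing (n + 1)
  | 0 => .leaf
  | n+1 => bcast (by omega) (.node .leaf (rcomb n))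

theorem rdepth_rcomb : ∀ (n : ℕ) (i : Fin (n + 1)), (rcomb n).rdepth i = i
  | 0, i => by
    have : (i : ℕ) = 0 := by omega
    simp [rcomb, Bracketing.rdepth, this]
  | n+1, i => by
    rw [rcomb, rdepth_bcast]
    rcases Nat.eq_zero_or_pos (i : ℕ) with h0 | hpos
    · simp [Bracketing.rdepth, h0]
    · have h : ¬ ((i : ℕ) < 1) := by omega
      simp only [Bracketing.rdepth, Fin.coe_cast, h, dif_neg, not_false_iff,
        rdepth_rcomb n]
      omega

def perfect : (k : ℕ) → Bracketing (2 ^ k)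
  | 0 => .leaf
  | k+1 => bcast (by rw [pow_succ]; omega) (.node (perfect k) (perfect k))

theorem depth_perfect : ∀ (k : ℕ) (i : Fin (2 ^ k)), (perfect k).depth i = k
  | 0, i => by simp [perfect, Bracketing.depth]
  | k+1, i => by
    rw [perfect, depth_bcast]
    by_cases h : ((Fin.cast (by rw [pow_succ]; omega : (2:ℕ)^k + 2^k = 2^(k+1)).symm i : Fin (2^k + 2^k)) : ℕ) < 2^k
    · simp only [Bracketing.depth, h, dif_pos, depth_perfect k]
    · simp only [Bracketing.depth, h, dif_neg, not_false_iff, depth_perfect k]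

end Bracketing
/-- Paper's Proposition 6.4: for nonzero `p ∈ ℂ`, the operation `px + py` fails to be
Catalan iff `p` is a root of unity, and likewise for `x + py`. -/
theorem stmt19 (p : ℂ) (hp : p ≠ 0) :
    (¬ IsCatalanOp (fun x y : ℂ => p * x + p * y) ↔ ∃ k : ℕ, 0 < k ∧ p ^ k = 1) ∧
    (¬ IsCatalanOp (fun x y : ℂ => x + p * y) ↔ ∃ k : ℕ, 0 < k ∧ p ^ k = 1) := by
  have hpow : (¬ ∃ k : ℕ, 0 < k ∧ p ^ k = 1) → ∀ a b : ℕ, p ^ a = p ^ b → a = b := by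
    intro hroot a b hab
    by_contra hne
    wlog hlt : a < b generalizing a b
    · exact this b a hab.symm (Ne.symm hne) (by omega)
    apply hroot
    refine ⟨b - a, by omega, ?_⟩
    have hpa : p ^ a ≠ 0 := pow_ne_zero _ hp
    have hmul : p ^ a * p ^ (b - a) = p ^ a * 1 := by
      rw [mul_one, ← pow_add, show a + (b - a) = b by omega]
      exact hab.symm
    exact mul_left_cancel₀ hpa hmul
  have hop2 : (fun x y : ℂ => x + p * y) = (fun x y : ℂ => 1 * x + p * y) := by
    funext x y; ring
  constructor
  · constructor
    · intro hnc
      by_contra hroot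
      apply hnc
      intro n B₁ B₂ hne heq
      apply hne
      apply Bracketing.depth_inj
      funext j
      have h1 := congrFun heq (Pi.single j 1)
      rw [Bracketing.eval_single p p, Bracketing.eval_single p p] at h1
      rw [← pow_add, ← pow_add, ← Bracketing.depth_eq_add, ← Bracketing.depth_eq_add] at h1
      exact hpow hroot _ _ h1
    · rintro ⟨k, hk, hpk⟩ hcat
      have h2k : 1 ≤ 2 ^ k := Nat.one_le_two_pow
      set A : Bracketing (2 ^ k + 1) := Bracketing.node (Bracketing.perfect k) .leaf with hA
      set B : Bracketing (2 ^ k + 1) :=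
        Bracketing.bcast (by omega) (Bracketing.node .leaf (Bracketing.perfect k)) with hB
      have hdA : ∀ i : Fin (2 ^ k + 1), A.depth i = if (i : ℕ) < 2 ^ k then k + 1 else 1 := by
        intro i
        by_cases h : (i : ℕ) < 2 ^ k
        · simp [hA, Bracketing.depth, h, Bracketing.depth_perfect]
        · simp [hA, Bracketing.depth, h]
      have hdB : ∀ i : Fin (2 ^ k + 1), B.depth i = if (i : ℕ) < 1 then 1 else k + 1 := by
        intro i
        by_cases h : (i : ℕ) < 1
        · simp [hB, Bracketing.depth, h]
        · simp [hB, Bracketing.depth, h, Bracketing.depth_perfect]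
      have hne : A ≠ B := by
        intro hab
        have h0 := congrArg (fun T : Bracketing (2 ^ k + 1) => T.depth ⟨0, by omega⟩) hab
        simp only [hdA, hdB] at h0
        rw [if_pos (by simpa using h2k), if_pos (by norm_num)] at h0
        omega
      apply hcat _ A B hne
      funext v
      rw [Bracketing.eval_affine, Bracketing.eval_affine]
      apply Finset.sum_congr rfl
      intro i _
      congr 1
      rw [← pow_add, ← pow_add, ← Bracketing.depth_eq_add, ← Bracketing.depth_eq_add,
        hdA, hdB]
      by_cases h : (i : ℕ) < 2 ^ k <;> by_cases h1 : (i : ℕ) < 1 <;>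
        simp [h, h1, pow_succ, hpk]
  · constructor
    · intro hnc
      by_contra hroot
      apply hnc
      intro n B₁ B₂ hne heq
      apply hne
      apply Bracketing.rdepth_inj
      funext j
      rw [hop2] at heq
      have h1 := congrFun heq (Pi.single j 1)
      rw [Bracketing.eval_single 1 p, Bracketing.eval_single 1 p] at h1
      simp only [one_pow, one_mul] at h1
      exact hpow hroot _ _ h1
    · rintro ⟨k, hk, hpk⟩ hcat
      set A : Bracketing (k + 1 + 1) := Bracketing.node (Bracketing.rcomb k) .leaf with hA
      set B : Bracketing (k + 1 + 1) := Bracketing.rcomb (k + 1) with hB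
      have hrA : ∀ i : Fin (k + 1 + 1), A.rdepth i = if (i : ℕ) < k + 1 then (i : ℕ) else 1 := by
        intro i
        by_cases h : (i : ℕ) < k + 1
        · simp [hA, Bracketing.rdepth, h, Bracketing.rdepth_rcomb]
        · simp [hA, Bracketing.rdepth, h]
      have hrB : ∀ i : Fin (k + 1 + 1), B.rdepth i = (i : ℕ) :=
        fun i => Bracketing.rdepth_rcomb (k + 1) i
      have hne : A ≠ B := by
        intro hab
        have h0 := congrArg
          (fun T : Bracketing (k + 1 + 1) => T.rdepth ⟨k + 1, by omega⟩) hab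
        simp only [hrA, hrB] at h0
        rw [if_neg (by simp)] at h0
        simp at h0
        omega
      apply hcat _ A B hne
      funext v
      rw [hop2, Bracketing.eval_affine, Bracketing.eval_affine]
      apply Finset.sum_congr rfl
      intro i _
      congr 1
      simp only [one_pow, one_mul, hrA, hrB]
      by_cases h : (i : ℕ) < k + 1
      · rw [if_pos h]
      · rw [if_neg h]
        have : (i : ℕ) = k + 1 := by omega
        rw [this, pow_one, pow_succ, hpk, one_mul]
end
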